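/- With B_{α,β} = z(z-1)∂_z² + (z(α+β+2)-(β+1))∂_z and B̄''' = B_{α,β} - 2z∂_z - (α+β), the Jacobi polynomials satisfy λ_{n-1} p_n^{α,β}(z) - λ_n p_{n-1}^{α,β}(z) = B̄'''(p_n^{α,β}(z) - p_{n-1}^{α,β}(z)) for all n ≥ 0, where λ_n = n(n+α+β+1) and p_{-1} = 0. -/

import Mathlib

open Finset

/-- Shifted factorial (Pochhammer symbol) `(a)_m = a(a+1)⋯(a+m-1)`. -/
noncomputable def poch (a : ℝ) (m : ℕ) : ℝ := ∏ i ∈ Finset.range m, (a + i)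

/-- The Jacobi polynomial `p_n^{α,β}(z)` normalized as in the paper. -/
noncomputable def jacobiP (α β : ℝ) (n : ℕ) (z : ℝ) : ℝ :=
  (-1 : ℝ) ^ n * poch (α + β + 1) n / (Nat.factorial n) *
    ∑ m ∈ Finset.range (n + 1),
      poch (-(n : ℝ)) m * poch ((n : ℝ) + α + β + 1) m /
        (poch (β + 1) m * Nat.factorial m) * z ^ m

/-- Jacobi polynomials indexed by an integer, with the convention `p_n = 0` for `n < 0`. -/
noncomputable def jacobiPZ (α β : ℝ) (n : ℤ) (z : ℝ) : ℝ :=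
  if n < 0 then 0 else jacobiP α β n.toNat z

/-- The Jacobi differential operator `B_{α,β} = z(z-1)∂_z² + (z(α+β+2)-(β+1))∂_z`. -/
noncomputable def jacobiOp (α β : ℝ) (f : ℝ → ℝ) : ℝ → ℝ :=
  fun z => z * (z - 1) * deriv (deriv f) z + (z * (α + β + 2) - (β + 1)) * deriv f z

/-- The operator `B̄''' = B_{α,β} - 2z∂_z - (α+β)`. -/
noncomputable def Bppp (α β : ℝ) (f : ℝ → ℝ) : ℝ → ℝ :=
  fun z => jacobiOp α β f z - 2 * z * deriv f z - (α + β) * f z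

/-! ### Auxiliary lemmas -/

lemma poch_succ (a : ℝ) (m : ℕ) : poch a (m+1) = poch a m * (a + m) := by
  simp [poch, Finset.prod_range_succ]

lemma poch_succ' (a : ℝ) (m : ℕ) : poch a (m+1) = a * poch (a+1) m := by
  rw [poch, poch, Finset.prod_range_succ']
  rw [mul_comm]
  congr 1
  · simp
  · exact Finset.prod_congr rfl fun i _ => by push_cast; ring

lemma poch_ne_zero (β : ℝ) (hβ : ∀ j : ℕ, β + 1 + (j : ℝ) ≠ 0) (m : ℕ) :
    poch (β+1) m ≠ 0 :=
  Finset.prod_ne_zero_iff.2 fun i _ => hβ i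

lemma poch_neg_nat_eq_zero (k m : ℕ) (h : k < m) : poch (-(k:ℝ)) m = 0 :=
  Finset.prod_eq_zero (Finset.mem_range.2 h) (by simp)

/-- The purely algebraic core identity. -/
lemma key_alg (s β kk mm a a1 b b' : ℝ)
    (hR1 : a * (mm - kk) = -(kk * a1))
    (hR2 : b' * (kk + s + mm) = (kk + s) * b) :
    (kk-1)*(kk+s)*((s+kk)*a*b*((β+1+mm)*(mm+1)))
      - kk*(kk+s+1)*(-(kk*(a1*b'*((β+1+mm)*(mm+1)))))
    = (mm-1)*(mm+s)*(((s+kk)*a*b - (-(kk*(a1*b'))))*((β+1+mm)*(mm+1)))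
      - (mm+1)*(mm+1+β)*((s+kk)*((a*(mm-kk))*(b*(kk+s+1+mm)))
          - (-(kk*((a1*(mm-kk+1))*(b'*(kk+s+mm)))))) := by
  linear_combination (2*((β+1+mm)*(mm+1))*(kk+s)*b) * hR1
    + (2*kk*((β+1+mm)*(mm+1))*a1) * hR2

/-- Coefficient of `z^m` in `jacobiP α β k`. -/
noncomputable def jc (α β : ℝ) (k m : ℕ) : ℝ :=
  (-1:ℝ)^k * poch (α+β+1) k / (Nat.factorial k) *
    (poch (-(k:ℝ)) m * poch ((k:ℝ)+α+β+1) m / (poch (β+1) m * Nat.factorial m))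

set_option maxHeartbeats 2000000 in
lemma coeff_id (α β : ℝ) (hβ : ∀ j : ℕ, β + 1 + (j : ℝ) ≠ 0) (j m : ℕ) :
    ((j:ℝ)+1-1)*((j:ℝ)+1+α+β) * jc α β (j+1) m
      - ((j:ℝ)+1)*((j:ℝ)+1+α+β+1) * jc α β j m
    = ((m:ℝ)-1)*((m:ℝ)+α+β) * (jc α β (j+1) m - jc α β j m)
      - ((m:ℝ)+1)*((m:ℝ)+1+β) * (jc α β (j+1) (m+1) - jc α β j (m+1)) := by
  have hq : poch (β+1) m ≠ 0 := poch_ne_zero β hβ m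
  have hq1 : (β+1+(m:ℝ)) ≠ 0 := hβ m
  have hfm : ((Nat.factorial m : ℕ) : ℝ) ≠ 0 := by
    exact_mod_cast Nat.factorial_ne_zero m
  have hf1 : ((Nat.factorial j : ℕ) : ℝ) ≠ 0 := by
    exact_mod_cast Nat.factorial_ne_zero j
  have hν : ((j:ℝ)+1) ≠ 0 := by positivity
  have hm1 : ((m:ℝ)+1) ≠ 0 := by positivity
  -- relations
  have hR1 : poch (-((j:ℝ)+1)) m * ((m:ℝ) - ((j:ℝ)+1)) = -(((j:ℝ)+1) * poch (-(j:ℝ)) m) := by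
    have h1 := poch_succ (-((j:ℝ)+1)) m
    have h2 := poch_succ' (-((j:ℝ)+1)) m
    have e0 : -((j:ℝ)+1) + 1 = -(j:ℝ) := by ring
    rw [e0] at h2
    linear_combination h2 - h1
  have hR2 : poch ((j:ℝ)+α+β+1) m * (((j:ℝ)+1) + (α+β) + (m:ℝ))
      = (((j:ℝ)+1) + (α+β)) * poch (((j:ℝ)+1)+α+β+1) m := by
    have h1 := poch_succ ((j:ℝ)+α+β+1) m
    have h2 := poch_succ' ((j:ℝ)+α+β+1) m
    have e1 : (j:ℝ)+α+β+1+1 = ((j:ℝ)+1)+α+β+1 := by ring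
    rw [e1] at h2
    linear_combination h2 - h1
  -- expand all composite poch/factorials
  have e_pochF : poch (α+β+1) (j+1) = poch (α+β+1) j * ((α+β+1)+(j:ℝ)) := poch_succ _ _
  have e_a1 : poch (-(j:ℝ)) (m+1) = poch (-(j:ℝ)) m * (-(j:ℝ)+(m:ℝ)) := poch_succ _ _
  have e_a : poch (-((j:ℝ)+1)) (m+1) = poch (-((j:ℝ)+1)) m * (-((j:ℝ)+1)+(m:ℝ)) := poch_succ _ _
  have e_b : poch (((j:ℝ)+1)+α+β+1) (m+1)
      = poch (((j:ℝ)+1)+α+β+1) m * ((((j:ℝ)+1)+α+β+1)+(m:ℝ)) := poch_succ _ _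
  have e_b' : poch ((j:ℝ)+α+β+1) (m+1)
      = poch ((j:ℝ)+α+β+1) m * (((j:ℝ)+α+β+1)+(m:ℝ)) := poch_succ _ _
  have e_q : poch (β+1) (m+1) = poch (β+1) m * ((β+1)+(m:ℝ)) := poch_succ _ _
  have hkey := key_alg (α+β) β ((j:ℝ)+1) (m:ℝ)
      (poch (-((j:ℝ)+1)) m) (poch (-(j:ℝ)) m)
      (poch (((j:ℝ)+1)+α+β+1) m) (poch ((j:ℝ)+α+β+1) m) hR1 hR2
  have hkey2 := congrArg (fun x => (-(-1:ℝ)^j * poch (α+β+1) j) * x) hkey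
  have hD : (((j:ℝ)+1) * (Nat.factorial j : ℝ) * poch (β+1) m *
      ((β+1+(m:ℝ))*((m:ℝ)+1)) * (Nat.factorial m : ℝ)) ≠ 0 := by
    exact mul_ne_zero (mul_ne_zero (mul_ne_zero (mul_ne_zero hν hf1) hq)
      (mul_ne_zero hq1 hm1)) hfm
  simp only [jc, Nat.factorial_succ, pow_succ, Nat.cast_mul, Nat.cast_add, Nat.cast_one]
  rw [e_pochF, e_a1, e_a, e_b, e_b', e_q]
  refine mul_left_cancel₀ hD (Eq.trans ?_ (Eq.trans hkey2 ?_))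
  · field_simp
    ring
  · field_simp
    ring

lemma jc_eq_zero (α β : ℝ) (k m : ℕ) (h : k < m) : jc α β k m = 0 := by
  simp [jc, poch_neg_nat_eq_zero k m h]

lemma jacobiP_eq_sum (α β : ℝ) (k N : ℕ) (hN : k < N) (z : ℝ) :
    jacobiP α β k z = ∑ m ∈ Finset.range N, jc α β k m * z ^ m := by
  rw [jacobiP, Finset.mul_sum]
  rw [Finset.sum_subset (Finset.range_subset_range.2 hN)]
  · exact Finset.sum_congr rfl fun m _ => by rw [jc]; ring
  · intro m _ hm
    have hk : k < m := by
      have := Finset.mem_range.not.1 hm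
      omega
    simp [poch_neg_nat_eq_zero k m hk]

lemma deriv_poly_sum (N : ℕ) (d : ℕ → ℝ) (e : ℕ → ℕ) :
    deriv (fun z : ℝ => ∑ m ∈ Finset.range N, d m * z ^ e m)
      = fun z => ∑ m ∈ Finset.range N, d m * ((e m : ℝ) * z ^ (e m - 1)) := by
  funext z
  rw [deriv_fun_sum (fun m _ => ((differentiable_pow (e m)).differentiableAt).const_mul (d m))]
  exact Finset.sum_congr rfl fun m _ => by
    rw [deriv_const_mul _ ((differentiable_pow (e m)).differentiableAt), deriv_pow_field]

lemma deriv1 (N : ℕ) (d : ℕ → ℝ) :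
    deriv (fun z : ℝ => ∑ m ∈ Finset.range N, d m * z ^ m)
      = fun z => ∑ m ∈ Finset.range N, d m * ((m : ℝ) * z ^ (m - 1)) :=
  deriv_poly_sum N d (fun m => m)

lemma deriv2 (N : ℕ) (d : ℕ → ℝ) :
    deriv (fun z : ℝ => ∑ m ∈ Finset.range N, d m * ((m : ℝ) * z ^ (m - 1)))
      = fun z => ∑ m ∈ Finset.range N, d m * ((m : ℝ) * (((m : ℝ) - 1) * z ^ (m - 2))) := by
  have hfun : (fun z : ℝ => ∑ m ∈ Finset.range N, d m * ((m:ℝ) * z ^ (m-1)))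
      = fun z => ∑ m ∈ Finset.range N, (d m * (m:ℝ)) * z ^ (m-1) := by
    funext z; exact Finset.sum_congr rfl fun m _ => by ring
  rw [hfun, deriv_poly_sum N (fun m => d m * (m:ℝ)) (fun m => m - 1)]
  funext z
  refine Finset.sum_congr rfl fun m _ => ?_
  rcases m with _ | m
  · simp
  · simp only [Nat.add_sub_cancel]
    push_cast
    ring

/-- Per-monomial identity for the operator `Bppp`. -/
lemma mono_id (α β : ℝ) (d : ℝ) (m : ℕ) (z : ℝ) :
    z*(z-1)*(d*((m:ℝ)*(((m:ℝ)-1)*z^(m-2)))) + (z*(α+β+2)-(β+1))*(d*((m:ℝ)*z^(m-1)))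
      - 2*z*(d*((m:ℝ)*z^(m-1))) - (α+β)*(d*z^m)
    = ((m:ℝ)-1)*((m:ℝ)+α+β)*d*z^m - (m:ℝ)*((m:ℝ)+β)*d*z^(m-1) := by
  match m with
  | 0 => norm_num; try ring
  | 1 => norm_num; try ring
  | (m+2) =>
    have e1 : m + 2 - 1 = m + 1 := rfl
    have e2 : m + 2 - 2 = m := rfl
    rw [e1, e2, pow_succ, pow_succ]
    push_cast
    ring

lemma sum_shift (N : ℕ) (c : ℕ → ℝ) (z : ℝ) (hc0 : c 0 = 0) (hcN : c (N+1) = 0) :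
    ∑ m ∈ Finset.range (N+1), c m * z^(m-1)
      = ∑ m ∈ Finset.range (N+1), c (m+1) * z^m := by
  rw [Finset.sum_range_succ' (fun m => c m * z^(m-1)) N]
  rw [Finset.sum_range_succ (fun m => c (m+1) * z^m) N]
  rw [hc0, hcN]
  simp [Nat.add_sub_cancel]

theorem lambda_swap_identity (α β : ℝ)
    (hβ : ∀ j : ℕ, β + 1 + (j : ℝ) ≠ 0)
    (n : ℤ) (hn : 0 ≤ n) (z : ℝ) :
    ((n : ℝ) - 1) * ((n : ℝ) + α + β) * jacobiPZ α β n z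
      - (n : ℝ) * ((n : ℝ) + α + β + 1) * jacobiPZ α β (n - 1) z
      = Bppp α β (fun w => jacobiPZ α β n w - jacobiPZ α β (n - 1) w) z := by
  lift n to ℕ using hn with k
  rcases k with _ | j
  · -- n = 0
    have hfun : (fun w => jacobiPZ α β ((0:ℕ):ℤ) w - jacobiPZ α β (((0:ℕ):ℤ) - 1) w)
        = fun _ => (1:ℝ) := by
      funext w
      simp [jacobiPZ, jacobiP, poch]
    rw [hfun]
    have h1 : deriv (fun _ : ℝ => (1:ℝ)) = fun _ => 0 := by
      funext w; exact deriv_const w 1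
    simp [Bppp, jacobiOp, jacobiPZ, jacobiP, poch, h1]
  · -- n = j + 1
    set K := j + 1 with hK
    have hz1 : ∀ w, jacobiPZ α β ((K:ℕ):ℤ) w = jacobiP α β K w := by
      intro w; simp [jacobiPZ]
    have hz2 : ∀ w, jacobiPZ α β (((K:ℕ):ℤ) - 1) w = jacobiP α β j w := by
      intro w
      have e : ((K:ℕ):ℤ) - 1 = ((j:ℕ):ℤ) := by push_cast [hK]; ring
      rw [e]
      simp [jacobiPZ]
    obtain ⟨dd, hdd⟩ : ∃ dd : ℕ → ℝ, dd = fun m => jc α β K m - jc α β j m := ⟨_, rfl⟩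
    have hfun : (fun w => jacobiPZ α β ((K:ℕ):ℤ) w - jacobiPZ α β (((K:ℕ):ℤ) - 1) w)
        = fun w => ∑ m ∈ Finset.range (K+2), dd m * w ^ m := by
      funext w
      rw [hz1 w, hz2 w, jacobiP_eq_sum α β K (K+2) (by omega) w,
        jacobiP_eq_sum α β j (K+2) (by omega) w, ← Finset.sum_sub_distrib]
      exact Finset.sum_congr rfl fun m _ => by rw [hdd]; ring
    rw [hfun, hz1 z, hz2 z]
    simp only [Bppp, jacobiOp, deriv1 (K+2) dd, deriv2 (K+2) dd]
    -- compute the RHS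
    have hBp : z * (z - 1) * (∑ m ∈ Finset.range (K+2), dd m * ((m:ℝ) * (((m:ℝ)-1) * z ^ (m-2))))
          + (z * (α + β + 2) - (β + 1)) * (∑ m ∈ Finset.range (K+2), dd m * ((m:ℝ) * z ^ (m-1)))
          - 2 * z * (∑ m ∈ Finset.range (K+2), dd m * ((m:ℝ) * z ^ (m-1)))
          - (α + β) * (∑ m ∈ Finset.range (K+2), dd m * z ^ m)
        = ∑ m ∈ Finset.range (K+2),
            (((m:ℝ)-1)*((m:ℝ)+α+β)*dd m*z^m - ((m:ℝ)*((m:ℝ)+β)*dd m)*z^(m-1)) := by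
      rw [Finset.mul_sum, Finset.mul_sum, Finset.mul_sum, Finset.mul_sum,
        ← Finset.sum_add_distrib, ← Finset.sum_sub_distrib, ← Finset.sum_sub_distrib]
      refine Finset.sum_congr rfl fun m _ => ?_
      have := mono_id α β (dd m) m z
      linear_combination this
    rw [hBp, Finset.sum_sub_distrib]
    have hshift : ∑ m ∈ Finset.range (K+2), ((m:ℝ)*((m:ℝ)+β)*dd m)*z^(m-1)
        = ∑ m ∈ Finset.range (K+2), (((m:ℝ)+1)*(((m:ℝ)+1)+β)*dd (m+1))*z^m := by
      rw [show K + 2 = (K+1) + 1 from rfl,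
        sum_shift (K+1) (fun m => (m:ℝ)*((m:ℝ)+β)*dd m) z (by norm_num)
          (by rw [hdd]
              simp [jc_eq_zero α β K (K+2) (by omega), jc_eq_zero α β j (K+2) (by omega)])]
      exact Finset.sum_congr rfl fun m _ => by push_cast; ring
    rw [hshift]
    rw [jacobiP_eq_sum α β K (K+2) (by omega) z, jacobiP_eq_sum α β j (K+2) (by omega) z,
      Finset.mul_sum, Finset.mul_sum, ← Finset.sum_sub_distrib, ← Finset.sum_sub_distrib]
    refine Finset.sum_congr rfl fun m _ => ?_
    have hco := coeff_id α β hβ j m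
    rw [hdd, hK]
    push_cast
    linear_combination z^m * hco
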